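/- Let λ₁⁺, λ₁⁻, λ₂, λ₃, μ₂, μ₃ > 0, Λ := λ₁⁺ + λ₁⁻, δ := λ₁⁺/Λ, ρ₂ := λ₂/μ₂, ρ₃ := λ₃/μ₃, and E_P := δ·ρ₂·ρ₃. Then E_P + λ₂·ρ₃²·δ·∫₀^∞[∫₀^∞(e^{-μ₃·max(s−t,0)} − e^{-μ₃·s})² ds]·μ₂·e^{-μ₂·t} dt + ρ₂²·ρ₃²·δ·(1−δ)·∫_{ℝ₊⁴} e^{-Λ·|(u₁−u₂)+(v₁−v₂)|}·μ₂²·μ₃²·e^{-μ₂(u₁+u₂)}·e^{-μ₃(v₁+v₂)} du₁du₂dv₁dv₂ = E_P·(1 + λ₃/(μ₂+μ₃) + λ₂·λ₃·(1−δ)·(Λ+μ₂+μ₃)/((μ₂+μ₃)·(Λ+μ₂)·(Λ+μ₃))). That is, when both the mRNA and protein lifetimes are exponentially distributed (parameters μ₂ and μ₃), the general integral formula for the variance of the number of proteins at equilibrium reduces to the classical closed form var_E(P). -/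

import Mathlib

/-!
Both integrals are computed by cutting the quadrant `(0, ∞)²` along its diagonal and writing the
larger coordinate as the smaller one plus a nonnegative increment: these shears preserve Lebesgue
measure, and on each half the integrands factor into one-dimensional exponential integrals. For the
mRNA term this gives `1/μ₂ - 1/(μ₂ + μ₃)` at once. For the switching term the same cut yields
`∫∫ h (x - y) e^{-a x - b y} = (∫ h(u) e^{-a u} + ∫ h(-u) e^{-b u}) / (a + b)`, which integrates out
`(v₁, v₂)` and then `(u₁, u₂)`; what remains are the integrals of `e^{-Λ |x ± y|}` against
`e^{-μ₂ x - μ₃ y}` over the quadrant, the one with `x - y` being again an instance of that identity.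
-/

open Real MeasureTheory Set

lemma integrableOn_exp_neg_mul_Ioi {c : ℝ} (hc : 0 < c) (a : ℝ) :
    IntegrableOn (fun x => exp (-(c * x))) (Ioi a) := by
  simpa only [neg_mul] using exp_neg_integrableOn_Ioi a hc

lemma integral_exp_neg_mul_Ioi_zero {c : ℝ} (hc : 0 < c) :
    ∫ x in Ioi (0:ℝ), exp (-(c * x)) = c⁻¹ := by
  simpa [neg_mul, div_neg, neg_div] using integral_exp_mul_Ioi (a := -c) (by linarith) 0

lemma integrableOn_mul_exp_neg_mul_Ioi {h : ℝ → ℝ} (hm : Measurable h) {c C : ℝ} (hc : 0 < c)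
    (hC : ∀ x, |h x| ≤ C) : IntegrableOn (fun x => h x * exp (-(c * x))) (Ioi 0) := by
  refine Integrable.mono' ((integrableOn_exp_neg_mul_Ioi hc 0).const_mul C) (by fun_prop)
    (Filter.Eventually.of_forall fun x => ?_)
  rw [Real.norm_eq_abs, abs_mul, abs_of_pos (exp_pos _)]
  exact mul_le_mul_of_nonneg_right (hC x) (exp_pos _).le

lemma abs_integral_mul_exp_neg_mul_Ioi_le {h : ℝ → ℝ} {c C : ℝ} (hc : 0 < c)
    (hC : ∀ x, |h x| ≤ C) : |∫ x in Ioi (0:ℝ), h x * exp (-(c * x))| ≤ C / c := by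
  rw [← Real.norm_eq_abs, div_eq_mul_inv, ← integral_exp_neg_mul_Ioi_zero hc, ← integral_const_mul]
  refine norm_integral_le_of_norm_le ((integrableOn_exp_neg_mul_Ioi hc 0).const_mul C)
    (Filter.Eventually.of_forall fun x => ?_)
  rw [Real.norm_eq_abs, abs_mul, abs_of_pos (exp_pos _)]
  exact mul_le_mul_of_nonneg_right (hC x) (exp_pos _).le

lemma abs_exp_neg_mul_abs_le_one {Λ : ℝ} (hΛ : 0 ≤ Λ) (x : ℝ) : |exp (-(Λ * |x|))| ≤ 1 := by
  rw [abs_of_pos (exp_pos _), exp_le_one_iff, neg_nonpos]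
  positivity

lemma integral_exp_abs_mul_exp_Ioi {Λ c : ℝ} (hΛc : 0 < Λ + c) :
    ∫ u in Ioi (0:ℝ), exp (-(Λ * |u|)) * exp (-(c * u)) = 1 / (Λ + c) := by
  rw [one_div, ← integral_exp_neg_mul_Ioi_zero hΛc]
  refine setIntegral_congr_fun measurableSet_Ioi fun u (hu : 0 < u) => ?_
  rw [abs_of_pos hu, ← exp_add]; ring_nf

lemma integral_one_sub_exp_sq_mul_exp_Ioi {b c : ℝ} (hb : 0 < b) (hc : 0 ≤ c) :
    ∫ x in Ioi (0:ℝ), (1 - exp (-(c * x))) ^ 2 * exp (-(b * x)) =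
      2 * c ^ 2 / (b * (b + c) * (b + 2 * c)) := by
  have hexpand (x : ℝ) : (1 - exp (-(c * x))) ^ 2 * exp (-(b * x)) =
      exp (-(b * x)) - 2 * exp (-((b + c) * x)) + exp (-((b + 2 * c) * x)) := by
    have h1 : exp (-((b + c) * x)) = exp (-(c * x)) * exp (-(b * x)) := by
      rw [← exp_add]; ring_nf
    have h2 : exp (-((b + 2 * c) * x)) = exp (-(c * x)) ^ 2 * exp (-(b * x)) := by
      rw [sq, ← exp_add, ← exp_add]; ring_nf
    rw [h1, h2]; ring
  have i1 := integrableOn_exp_neg_mul_Ioi hb 0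
  have i2 := (integrableOn_exp_neg_mul_Ioi (by linarith : 0 < b + c) 0).const_mul 2
  have i3 := integrableOn_exp_neg_mul_Ioi (by linarith : 0 < b + 2 * c) 0
  simp_rw [hexpand]
  rw [integral_add _ i3, integral_sub i1 i2, integral_const_mul,
    integral_exp_neg_mul_Ioi_zero hb, integral_exp_neg_mul_Ioi_zero (by linarith),
    integral_exp_neg_mul_Ioi_zero (by linarith)]
  · field_simp
    ring
  · exact i1.sub i2

theorem integral_Ioi_Ioi_eq_shear_add_shear {E : Type*} [NormedAddCommGroup E] [NormedSpace ℝ E]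
    {f : ℝ × ℝ → E} (hf : IntegrableOn f (Ioi 0 ×ˢ Ioi 0)) :
    ∫ x in Ioi (0:ℝ), ∫ y in Ioi (0:ℝ), f (x, y) =
      (∫ p in Ioi (0:ℝ) ×ˢ Ioi (0:ℝ), f (p.1 + p.2, p.1)) +
        ∫ p in Ioi (0:ℝ) ×ˢ Ici (0:ℝ), f (p.1, p.1 + p.2) := by
  have hshear := measurePreserving_prod_add (volume : Measure ℝ) volume
  have hemb : MeasurableEmbedding (fun p : ℝ × ℝ => (p.1, p.1 + p.2)) :=
    (MeasurableEquiv.shearAddRight ℝ).measurableEmbedding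
  rw [Measure.volume_eq_prod] at hf ⊢
  rw [← setIntegral_prod f hf,
    ← integral_inter_add_sdiff (measurableSet_lt measurable_snd measurable_fst) hf]
  congr 1
  · rw [← (Measure.measurePreserving_swap.comp hshear).setIntegral_preimage_emb
      (MeasurableEquiv.prodComm.measurableEmbedding.comp hemb)]
    congr 2
    ext ⟨t, u⟩
    simp only [mem_preimage, Function.comp_apply, Prod.swap_prod_mk, mem_inter_iff, mem_prod,
      mem_Ioi, mem_ofPred_eq]
    constructor
    · rintro ⟨⟨-, ht⟩, h⟩; exact ⟨ht, by linarith⟩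
    · rintro ⟨ht, hu⟩; exact ⟨⟨by linarith, ht⟩, by linarith⟩
  · rw [← hshear.setIntegral_preimage_emb hemb]
    congr 2
    ext ⟨t, u⟩
    simp only [mem_preimage, mem_sdiff, mem_prod, mem_Ioi, mem_Ici, mem_ofPred_eq, not_lt]
    constructor
    · rintro ⟨⟨ht, -⟩, h⟩; exact ⟨ht, by linarith⟩
    · rintro ⟨ht, hu⟩; exact ⟨⟨ht, by linarith⟩, by linarith⟩

lemma integrableOn_Ioi_prod_Ioi_of_abs_le_exp {f : ℝ × ℝ → ℝ} (hf : Measurable f) {a b C : ℝ}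
    (ha : 0 < a) (hb : 0 < b) (hle : ∀ x > 0, ∀ y > 0, |f (x, y)| ≤ C * exp (-(a * x + b * y))) :
    IntegrableOn f (Ioi 0 ×ˢ Ioi 0) := by
  have hg : IntegrableOn (fun p : ℝ × ℝ => C * (exp (-(a * p.1)) * exp (-(b * p.2))))
      (Ioi 0 ×ˢ Ioi 0) := by
    rw [IntegrableOn, Measure.volume_eq_prod, ← Measure.prod_restrict]
    exact ((integrableOn_exp_neg_mul_Ioi ha 0).mul_prod
      (integrableOn_exp_neg_mul_Ioi hb 0)).const_mul C
  refine Integrable.mono' hg hf.aestronglyMeasurable ?_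
  filter_upwards [ae_restrict_mem (measurableSet_Ioi.prod measurableSet_Ioi)] with p hp
  rw [Real.norm_eq_abs, ← exp_add, ← neg_add]
  exact hle p.1 hp.1 p.2 hp.2

theorem integral_Ioi_Ioi_comp_sub_mul_exp {a b C : ℝ} (ha : 0 < a) (hb : 0 < b) {h : ℝ → ℝ}
    (hm : Measurable h) (hC : ∀ x, |h x| ≤ C) :
    ∫ x in Ioi (0:ℝ), ∫ y in Ioi (0:ℝ), h (x - y) * exp (-(a * x + b * y)) =
      ((∫ u in Ioi (0:ℝ), h u * exp (-(a * u))) + ∫ u in Ioi (0:ℝ), h (-u) * exp (-(b * u))) /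
        (a + b) := by
  have hint : IntegrableOn (fun p : ℝ × ℝ => h (p.1 - p.2) * exp (-(a * p.1 + b * p.2)))
      (Ioi 0 ×ˢ Ioi 0) := by
    refine integrableOn_Ioi_prod_Ioi_of_abs_le_exp (C := C) (by fun_prop) ha hb fun x _ y _ => ?_
    rw [abs_mul, abs_of_pos (exp_pos _)]
    exact mul_le_mul_of_nonneg_right (hC _) (exp_pos _).le
  have hA (p : ℝ × ℝ) : h ((p.1 + p.2) - p.1) * exp (-(a * (p.1 + p.2) + b * p.1)) =
      exp (-((a + b) * p.1)) * (h p.2 * exp (-(a * p.2))) := by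
    rw [add_sub_cancel_left, mul_left_comm, ← exp_add]; ring_nf
  have hB (p : ℝ × ℝ) : h (p.1 - (p.1 + p.2)) * exp (-(a * p.1 + b * (p.1 + p.2))) =
      exp (-((a + b) * p.1)) * (h (-p.2) * exp (-(b * p.2))) := by
    rw [sub_add_cancel_left, mul_left_comm, ← exp_add]; ring_nf
  rw [integral_Ioi_Ioi_eq_shear_add_shear hint]
  simp only [hA, hB]
  rw [Measure.volume_eq_prod,
    setIntegral_prod_mul (fun x => exp (-((a + b) * x))) (fun u => h u * exp (-(a * u))),
    setIntegral_prod_mul (fun x => exp (-((a + b) * x))) (fun u => h (-u) * exp (-(b * u))),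
    integral_Ici_eq_integral_Ioi,
    integral_exp_neg_mul_Ioi_zero (add_pos ha hb)]
  ring

lemma integrableOn_sq_exp_max_sub_sub_exp_mul_exp {mu2 mu3 : ℝ} (hmu2 : 0 < mu2)
    (hmu3 : 0 < mu3) :
    IntegrableOn (fun p : ℝ × ℝ =>
      (exp (-(mu3 * max (p.2 - p.1) 0)) - exp (-(mu3 * p.2))) ^ 2 * (mu2 * exp (-(mu2 * p.1))))
      (Ioi 0 ×ˢ Ioi 0) := by
  -- The square is at most `e^{-ε (s - t)}` once `ε ≤ μ₃`, and `ε ≤ μ₂ / 2` keeps the rate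
  -- `μ₂ - ε` left for `t` positive.
  set ε := min (mu2 / 2) mu3
  have hε : 0 < ε := lt_min (half_pos hmu2) hmu3
  refine integrableOn_Ioi_prod_Ioi_of_abs_le_exp (C := mu2) (a := mu2 - ε) (b := ε) (by fun_prop)
    (by linarith [min_le_left (mu2 / 2) mu3]) hε fun t ht s hs => ?_
  have hmax : ε * (s - t) ≤ mu3 * max (s - t) 0 := by
    rcases le_total (s - t) 0 with h | h
    · rw [max_eq_right h]; nlinarith
    · rw [max_eq_left h]; nlinarith [min_le_right (mu2 / 2) mu3]
  have hd0 : exp (-(mu3 * s)) ≤ exp (-(mu3 * max (s - t) 0)) :=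
    exp_le_exp.2 (by nlinarith [max_le (by linarith : s - t ≤ s) hs.le])
  have hd1 : exp (-(mu3 * max (s - t) 0)) ≤ 1 :=
    exp_le_one_iff.2 (by nlinarith [le_max_right (s - t) 0])
  set d := exp (-(mu3 * max (s - t) 0)) - exp (-(mu3 * s))
  have hd : d ^ 2 ≤ exp (-(ε * (s - t))) := by
    calc d ^ 2 ≤ exp (-(mu3 * max (s - t) 0)) := by nlinarith [exp_pos (-(mu3 * s))]
      _ ≤ exp (-(ε * (s - t))) := exp_le_exp.2 (by linarith)
  calc |d ^ 2 * (mu2 * exp (-(mu2 * t)))| = d ^ 2 * (mu2 * exp (-(mu2 * t))) :=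
        abs_of_nonneg (by positivity)
    _ ≤ exp (-(ε * (s - t))) * (mu2 * exp (-(mu2 * t))) := by gcongr
    _ = mu2 * exp (-((mu2 - ε) * t + ε * s)) := by rw [mul_left_comm, ← exp_add]; ring_nf

theorem integral_sq_exp_max_sub_sub_exp_mul_exp {mu2 mu3 : ℝ} (hmu2 : 0 < mu2) (hmu3 : 0 < mu3) :
    ∫ t in Ioi (0:ℝ),
      (∫ s in Ioi (0:ℝ), (exp (-(mu3 * max (s - t) 0)) - exp (-(mu3 * s))) ^ 2) *
        (mu2 * exp (-(mu2 * t))) = 1 / mu2 - 1 / (mu2 + mu3) := by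
  set g : ℝ × ℝ → ℝ := fun p =>
    (exp (-(mu3 * max (p.2 - p.1) 0)) - exp (-(mu3 * p.2))) ^ 2 * (mu2 * exp (-(mu2 * p.1)))
  have hA : ∀ p ∈ Ioi (0:ℝ) ×ˢ Ioi (0:ℝ), g (p.1 + p.2, p.1) =
      ((1 - exp (-(mu3 * p.1))) ^ 2 * exp (-(mu2 * p.1))) * (mu2 * exp (-(mu2 * p.2))) := by
    rintro ⟨s, u⟩ ⟨-, hu : 0 < u⟩
    have h1 : exp (-(mu2 * (s + u))) = exp (-(mu2 * s)) * exp (-(mu2 * u)) := by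
      rw [← exp_add]; ring_nf
    simp only [g, show s - (s + u) = -u by ring, max_eq_right (neg_nonpos.2 hu.le), mul_zero,
      neg_zero, exp_zero, h1]
    ring
  have hB : ∀ p ∈ Ioi (0:ℝ) ×ˢ Ici (0:ℝ), g (p.1, p.1 + p.2) =
      (mu2 * ((1 - exp (-(mu3 * p.1))) ^ 2 * exp (-(mu2 * p.1)))) * exp (-(2 * mu3 * p.2)) := by
    rintro ⟨t, u⟩ ⟨-, hu : 0 ≤ u⟩
    have h1 : exp (-(mu3 * (t + u))) = exp (-(mu3 * t)) * exp (-(mu3 * u)) := by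
      rw [← exp_add]; ring_nf
    have h2 : exp (-(2 * mu3 * u)) = exp (-(mu3 * u)) ^ 2 := by
      rw [sq, ← exp_add]; ring_nf
    simp only [g, add_sub_cancel_left, max_eq_left hu, h1, h2]
    ring
  calc _ = ∫ t in Ioi (0:ℝ), ∫ s in Ioi (0:ℝ), g (t, s) := by simp_rw [g, ← integral_mul_const]
    _ = _ := integral_Ioi_Ioi_eq_shear_add_shear
      (integrableOn_sq_exp_max_sub_sub_exp_mul_exp hmu2 hmu3)
    _ = 1 / mu2 - 1 / (mu2 + mu3) := by
      rw [setIntegral_congr_fun (measurableSet_Ioi.prod measurableSet_Ioi) hA,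
        setIntegral_congr_fun (measurableSet_Ioi.prod measurableSet_Ici) hB, Measure.volume_eq_prod,
        setIntegral_prod_mul (fun s => (1 - exp (-(mu3 * s))) ^ 2 * exp (-(mu2 * s)))
          (fun u => mu2 * exp (-(mu2 * u))),
        setIntegral_prod_mul (fun t => mu2 * ((1 - exp (-(mu3 * t))) ^ 2 * exp (-(mu2 * t))))
          (fun u => exp (-(2 * mu3 * u))),
        integral_Ici_eq_integral_Ioi, integral_const_mul, integral_const_mul,
        integral_one_sub_exp_sq_mul_exp_Ioi hmu2 hmu3.le, integral_exp_neg_mul_Ioi_zero hmu2,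
        integral_exp_neg_mul_Ioi_zero (by linarith)]
      field_simp
      ring

noncomputable def expAbsConv (Λ c x : ℝ) : ℝ :=
  ∫ y in Ioi (0:ℝ), exp (-(Λ * |x + y|)) * exp (-(c * y))

lemma measurable_expAbsConv (Λ c : ℝ) : Measurable (expAbsConv Λ c) :=
  (StronglyMeasurable.integral_prod_right'
    (f := fun p : ℝ × ℝ => exp (-(Λ * |p.1 + p.2|)) * exp (-(c * p.2)))
    (by fun_prop : Measurable _).stronglyMeasurable).measurable

lemma abs_expAbsConv_le {Λ c : ℝ} (hΛ : 0 ≤ Λ) (hc : 0 < c) (x : ℝ) :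
    |expAbsConv Λ c x| ≤ 1 / c :=
  abs_integral_mul_exp_neg_mul_Ioi_le hc fun y => abs_exp_neg_mul_abs_le_one hΛ (x + y)

lemma integral_expAbsConv_mul_exp {Λ b c : ℝ} (hΛ : 0 ≤ Λ) (hb : 0 < b) (hc : 0 < c) :
    ∫ x in Ioi (0:ℝ), expAbsConv Λ c x * exp (-(b * x)) = 1 / ((Λ + b) * (Λ + c)) := by
  have hx : ∀ x ∈ Ioi (0:ℝ), expAbsConv Λ c x * exp (-(b * x)) =
      exp (-((Λ + b) * x)) * (1 / (Λ + c)) := by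
    intro x (hx : 0 < x)
    have hy : ∀ y ∈ Ioi (0:ℝ), exp (-(Λ * |x + y|)) * exp (-(c * y)) =
        exp (-(Λ * x)) * exp (-((Λ + c) * y)) := by
      intro y (hy : 0 < y)
      rw [abs_of_pos (by linarith), ← exp_add, ← exp_add]; ring_nf
    rw [expAbsConv, setIntegral_congr_fun measurableSet_Ioi hy, integral_const_mul,
      integral_exp_neg_mul_Ioi_zero (by linarith), mul_right_comm, ← exp_add, one_div]
    ring_nf
  rw [setIntegral_congr_fun measurableSet_Ioi hx, integral_mul_const,
    integral_exp_neg_mul_Ioi_zero (by linarith)]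
  field_simp

lemma integral_expAbsConv_neg_mul_exp {Λ b c : ℝ} (hΛ : 0 ≤ Λ) (hb : 0 < b) (hc : 0 < c) :
    ∫ x in Ioi (0:ℝ), expAbsConv Λ c (-x) * exp (-(b * x)) =
      (1 / (Λ + b) + 1 / (Λ + c)) / (b + c) := by
  have hx (x : ℝ) : expAbsConv Λ c (-x) * exp (-(b * x)) =
      ∫ y in Ioi (0:ℝ), exp (-(Λ * |x - y|)) * exp (-(b * x + c * y)) := by
    rw [expAbsConv, ← integral_mul_const]
    congr 1 with y
    rw [show -x + y = -(x - y) by ring, abs_neg, mul_assoc, ← exp_add]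
    ring_nf
  simp_rw [hx]
  rw [integral_Ioi_Ioi_comp_sub_mul_exp hb hc (by fun_prop) (abs_exp_neg_mul_abs_le_one hΛ)]
  simp only [abs_neg]
  rw [integral_exp_abs_mul_exp_Ioi (by linarith), integral_exp_abs_mul_exp_Ioi (by linarith)]

lemma integral_expAbsConv_add_neg_mul_exp {Λ b c : ℝ} (hΛ : 0 ≤ Λ) (hb : 0 < b) (hc : 0 < c) :
    ∫ x in Ioi (0:ℝ), (expAbsConv Λ c x + expAbsConv Λ c (-x)) * exp (-(b * x)) =
      1 / ((Λ + b) * (Λ + c)) + (1 / (Λ + b) + 1 / (Λ + c)) / (b + c) := by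
  have hbound (x : ℝ) := abs_expAbsConv_le hΛ hc x
  simp_rw [add_mul _ _ (exp _)]
  rw [integral_add (integrableOn_mul_exp_neg_mul_Ioi (measurable_expAbsConv Λ c) hb hbound)
    (integrableOn_mul_exp_neg_mul_Ioi (h := fun x => expAbsConv Λ c (-x))
      ((measurable_expAbsConv Λ c).comp measurable_neg) hb fun x => hbound (-x)),
    integral_expAbsConv_mul_exp hΛ hb hc, integral_expAbsConv_neg_mul_exp hΛ hb hc]

lemma integral_Ioi_Ioi_exp_abs_add_sub {Λ c : ℝ} (hΛ : 0 ≤ Λ) (hc : 0 < c) (x : ℝ) :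
    ∫ v₁ in Ioi (0:ℝ), ∫ v₂ in Ioi (0:ℝ), exp (-(Λ * |x + (v₁ - v₂)|)) * exp (-(c * v₁ + c * v₂)) =
      (expAbsConv Λ c x + expAbsConv Λ c (-x)) / (c + c) := by
  rw [integral_Ioi_Ioi_comp_sub_mul_exp (h := fun y => exp (-(Λ * |x + y|))) hc hc (by fun_prop)
    fun y => abs_exp_neg_mul_abs_le_one hΛ (x + y)]
  congr 3 with u
  rw [show x + -u = -(-x + u) by ring, abs_neg]

theorem integral_exp_abs_sub_add_sub_mul_exp {Λ mu2 mu3 : ℝ} (hΛ : 0 ≤ Λ) (hmu2 : 0 < mu2)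
    (hmu3 : 0 < mu3) :
    ∫ u₁ in Ioi (0:ℝ), ∫ u₂ in Ioi (0:ℝ), ∫ v₁ in Ioi (0:ℝ), ∫ v₂ in Ioi (0:ℝ),
        exp (-(Λ * |(u₁ - u₂) + (v₁ - v₂)|)) *
          (mu2 ^ 2 * mu3 ^ 2 * exp (-(mu2 * (u₁ + u₂))) * exp (-(mu3 * (v₁ + v₂)))) =
      mu2 * mu3 / 2 *
        (1 / ((Λ + mu2) * (Λ + mu3)) + (1 / (Λ + mu2) + 1 / (Λ + mu3)) / (mu2 + mu3)) := by
  set k : ℝ → ℝ := fun x => expAbsConv Λ mu3 x + expAbsConv Λ mu3 (-x)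
  have hk_meas : Measurable k := by
    have := measurable_expAbsConv Λ mu3
    fun_prop
  have hk_le (x : ℝ) : |k x| ≤ 1 / mu3 + 1 / mu3 :=
    (abs_add_le _ _).trans
      (add_le_add (abs_expAbsConv_le hΛ hmu3 x) (abs_expAbsConv_le hΛ hmu3 (-x)))
  have hk_neg (x : ℝ) : k (-x) = k x := by simp only [k, neg_neg, add_comm]
  calc _ = ∫ u₁ in Ioi (0:ℝ), ∫ u₂ in Ioi (0:ℝ),
        mu2 ^ 2 * mu3 ^ 2 / (mu3 + mu3) * (k (u₁ - u₂) * exp (-(mu2 * u₁ + mu2 * u₂))) := by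
        refine setIntegral_congr_fun measurableSet_Ioi fun u₁ _ =>
          setIntegral_congr_fun measurableSet_Ioi fun u₂ _ => ?_
        have hsplit (v₁ v₂ : ℝ) : exp (-(Λ * |(u₁ - u₂) + (v₁ - v₂)|)) *
            (mu2 ^ 2 * mu3 ^ 2 * exp (-(mu2 * (u₁ + u₂))) * exp (-(mu3 * (v₁ + v₂)))) =
            mu2 ^ 2 * mu3 ^ 2 * exp (-(mu2 * u₁ + mu2 * u₂)) *
              (exp (-(Λ * |(u₁ - u₂) + (v₁ - v₂)|)) * exp (-(mu3 * v₁ + mu3 * v₂))) := by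
          rw [mul_add, mul_add]; ring
        simp_rw [hsplit, integral_const_mul, integral_Ioi_Ioi_exp_abs_add_sub hΛ hmu3]
        ring
    _ = mu2 ^ 2 * mu3 ^ 2 / (mu3 + mu3) *
          ((2 * ∫ x in Ioi (0:ℝ), k x * exp (-(mu2 * x))) / (mu2 + mu2)) := by
        simp_rw [integral_const_mul]
        rw [integral_Ioi_Ioi_comp_sub_mul_exp hmu2 hmu2 hk_meas hk_le]
        simp only [hk_neg, two_mul]
    _ = _ := by
        rw [integral_expAbsConv_add_neg_mul_exp hΛ hmu2 hmu3]
        field_simp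
        ring

theorem protein_variance_all_exponential_general
    (lam1p lam1m lam2 lam3 mu2 mu3 : ℝ)
    (h1p : 0 < lam1p) (h1m : 0 < lam1m)
    (hmu2 : 0 < mu2) (hmu3 : 0 < mu3)
    (Lam : ℝ) (hLam : Lam = lam1p + lam1m)
    (delta : ℝ)
    (rho2 : ℝ) (hrho2 : rho2 = lam2 / mu2)
    (rho3 : ℝ) (hrho3 : rho3 = lam3 / mu3)
    (EP : ℝ) (hEP : EP = delta * rho2 * rho3) :
    EP
      + lam2 * rho3 ^ 2 * delta *
        (∫ t in Set.Ioi (0 : ℝ),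
          (∫ s in Set.Ioi (0 : ℝ),
            (Real.exp (-(mu3 * max (s - t) 0)) - Real.exp (-(mu3 * s))) ^ 2)
            * (mu2 * Real.exp (-(mu2 * t))))
      + rho2 ^ 2 * rho3 ^ 2 * delta * (1 - delta) *
        (∫ u1 in Set.Ioi (0 : ℝ), ∫ u2 in Set.Ioi (0 : ℝ),
          ∫ v1 in Set.Ioi (0 : ℝ), ∫ v2 in Set.Ioi (0 : ℝ),
            Real.exp (-(Lam * |(u1 - u2) + (v1 - v2)|))
              * (mu2 ^ 2 * mu3 ^ 2 * Real.exp (-(mu2 * (u1 + u2)))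
                  * Real.exp (-(mu3 * (v1 + v2)))))
    = EP * (1 + lam3 / (mu2 + mu3)
        + lam2 * lam3 * (1 - delta) * (Lam + mu2 + mu3)
            / ((mu2 + mu3) * (Lam + mu2) * (Lam + mu3))) := by
  have hLam : 0 ≤ Lam := hLam ▸ (add_pos h1p h1m).le
  rw [integral_sq_exp_max_sub_sub_exp_mul_exp hmu2 hmu3,
    integral_exp_abs_sub_add_sub_mul_exp hLam hmu2 hmu3]
  subst hEP hrho2 hrho3
  field_simp
  ring

/-- When both mRNA and protein lifetimes are exponential (parameters `μ₂`, `μ₃`), the general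
integral formula for the variance of the number of proteins at equilibrium reduces to the
classical closed form `var_E(P)`. -/
theorem protein_variance_all_exponential
    (lam1p lam1m lam2 lam3 mu2 mu3 : ℝ)
    (h1p : 0 < lam1p) (h1m : 0 < lam1m) (h2 : 0 < lam2) (h3 : 0 < lam3)
    (hmu2 : 0 < mu2) (hmu3 : 0 < mu3)
    (Lam : ℝ) (hLam : Lam = lam1p + lam1m)
    (delta : ℝ) (hdelta : delta = lam1p / Lam)
    (rho2 : ℝ) (hrho2 : rho2 = lam2 / mu2)
    (rho3 : ℝ) (hrho3 : rho3 = lam3 / mu3)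
    (EP : ℝ) (hEP : EP = delta * rho2 * rho3) :
    EP
      + lam2 * rho3 ^ 2 * delta *
        (∫ t in Set.Ioi (0 : ℝ),
          (∫ s in Set.Ioi (0 : ℝ),
            (Real.exp (-(mu3 * max (s - t) 0)) - Real.exp (-(mu3 * s))) ^ 2)
            * (mu2 * Real.exp (-(mu2 * t))))
      + rho2 ^ 2 * rho3 ^ 2 * delta * (1 - delta) *
        (∫ u1 in Set.Ioi (0 : ℝ), ∫ u2 in Set.Ioi (0 : ℝ),
          ∫ v1 in Set.Ioi (0 : ℝ), ∫ v2 in Set.Ioi (0 : ℝ),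
            Real.exp (-(Lam * |(u1 - u2) + (v1 - v2)|))
              * (mu2 ^ 2 * mu3 ^ 2 * Real.exp (-(mu2 * (u1 + u2)))
                  * Real.exp (-(mu3 * (v1 + v2)))))
    = EP * (1 + lam3 / (mu2 + mu3)
        + lam2 * lam3 * (1 - delta) * (Lam + mu2 + mu3)
            / ((mu2 + mu3) * (Lam + mu2) * (Lam + mu3))) :=
  protein_variance_all_exponential_general lam1p lam1m lam2 lam3 mu2 mu3 h1p h1m hmu2 hmu3 Lam hLam
    delta rho2 hrho2 rho3 hrho3 EP hEP
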